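/- arXiv:math/0510471 — 6 statements merged into one kernel-verified Lean document; each statement's English description precedes it below -/
import Mathlib

section
/- Let G be a finite simple graph with vertex set {v_1,...,v_n} and maximum degree r, and let q ≥ r+1. Then the number of proper q-colorings satisfies Z(q,G) = Π_{k=1}^n ( q − E_{G_k}[|C(N(v_k,G_{k-1}))|] ), where the k-th expectation is over a uniformly random proper q-coloring of G_k = G \ {v_1,...,v_k} and N(v_k,G_{k-1}) is the neighborhood of v_k in G_{k-1}. -/
open Finset

/-- The finite set of proper `q`-colorings of the subgraph of `G` induced on the vertex
subset `S`, encoded as functions `V → Fin q` that are proper on `S` and take the junk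
value `0` outside `S` (so that they biject with colorings of the induced subgraph). -/
noncomputable def colSet {V : Type*} [Fintype V] (G : SimpleGraph V) (q : ℕ)
    (S : Finset V) : Finset (V → Fin q) := by
  classical
  exact (Finset.univ : Finset (V → Fin q)).filter
    (fun c => (∀ u ∈ S, ∀ w ∈ S, G.Adj u w → c u ≠ c w) ∧ ∀ x, x ∉ S → (c x : ℕ) = 0)

/-- `Z(q, G[S])`: the number of proper `q`-colorings of the subgraph induced on `S`. -/
noncomputable def Zcol {V : Type*} [Fintype V] (G : SimpleGraph V) (q : ℕ)
    (S : Finset V) : ℕ := (colSet G q S).card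

/-- The expectation, over a uniformly random proper `q`-coloring `C` of the subgraph of `G`
induced on `S`, of the number of distinct colors `|C(A)|` used on the vertex set `A`. -/
noncomputable def expColors {V : Type*} [Fintype V] (G : SimpleGraph V) (q : ℕ)
    (S A : Finset V) : ℝ := by
  classical exact (∑ c ∈ colSet G q S, ((A.image c).card : ℝ)) / (Zcol G q S : ℝ)

/-- The neighbors of `v` in the subgraph of `G` induced on `S`. -/
noncomputable def nbrIn {V : Type*} [Fintype V] (G : SimpleGraph V) (v : V)
    (S : Finset V) : Finset V := by
  classical exact S.filter (fun u => G.Adj v u)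

/-- Given an enumeration `e : Fin n ≃ V` of the vertices, `delSet e m` is the vertex set of
`G_m = G \ {v_1, …, v_m}`. -/
noncomputable def delSet {V : Type*} [Fintype V] {n : ℕ} (e : Fin n ≃ V) (m : ℕ) :
    Finset V := by
  classical exact Finset.univ \ (Finset.univ.filter (fun i : Fin n => (i : ℕ) < m)).image e

/-!
Removing a vertex `v` from a vertex set `S`: a proper coloring of `S` is a proper coloring `C`
of `S \ {v}` together with a color at `v` outside `C(N(v))`, so
`Z(S) = ∑_C (q - |C(N(v))|) = Z(S \ {v}) · (q - E[|C(N(v))|])`. Since `q` exceeds the maximum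
degree, every term is positive, hence so is `Z(S \ {v})` and the expectation is a genuine
average. Removing `v₁, …, vₙ` in turn telescopes to the product, ending at `Z(∅) = 1`.
-/

section Coloring

variable {V : Type*} [Fintype V] (G : SimpleGraph V) {q : ℕ}

@[simp]
lemma mem_colSet {S : Finset V} {c : V → Fin q} :
    c ∈ colSet G q S ↔
      (∀ u ∈ S, ∀ w ∈ S, G.Adj u w → c u ≠ c w) ∧ ∀ x, x ∉ S → (c x : ℕ) = 0 := by
  simp [colSet]

@[simp]
lemma mem_nbrIn {S : Finset V} {v u : V} : u ∈ nbrIn G v S ↔ u ∈ S ∧ G.Adj v u := by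
  simp [nbrIn]

lemma card_nbrIn_le (S : Finset V) (v : V) :
    (nbrIn G v S).card ≤ (G.neighborSet v).ncard := by
  rw [← Set.ncard_coe_finset]
  exact Set.ncard_le_ncard (fun u hu => ((mem_nbrIn G).1 hu).2) (Set.toFinite _)

lemma Zcol_empty (hq : 0 < q) : Zcol G q ∅ = 1 := by
  rw [Zcol, card_eq_one]
  refine ⟨fun _ => ⟨0, hq⟩, ?_⟩
  ext c
  simp [funext_iff, Fin.ext_iff]

lemma card_image_nbrIn_lt {r : ℕ} (hdeg : ∀ v : V, (G.neighborSet v).ncard ≤ r) (hq : r < q)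
    (S : Finset V) (v : V) (c : V → Fin q) : ((nbrIn G v S).image c).card < q :=
  (card_image_le.trans (card_nbrIn_le G S v)).trans_lt ((hdeg v).trans_lt hq)

variable [DecidableEq V]

lemma nbrIn_erase_self (S : Finset V) (v : V) : nbrIn G v (S.erase v) = nbrIn G v S := by
  ext u
  simp only [mem_nbrIn, mem_erase, and_assoc]
  grind [G.ne_of_adj]

lemma update_zero_mem_colSet_erase (hq : 0 < q) {S : Finset V} {c : V → Fin q}
    (hc : c ∈ colSet G q S) (v : V) : Function.update c v ⟨0, hq⟩ ∈ colSet G q (S.erase v) := by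
  simp only [mem_colSet, mem_erase] at hc ⊢
  refine ⟨fun u hu w hw huw => ?_, fun x hx => ?_⟩
  · simpa [Function.update_of_ne hu.1, Function.update_of_ne hw.1] using hc.1 u hu.2 w hw.2 huw
  · by_cases hxv : x = v
    · simp [hxv]
    · simpa [Function.update_of_ne hxv] using hc.2 x (by tauto)

lemma update_mem_colSet_iff {S : Finset V} {v : V} (hv : v ∈ S) {c : V → Fin q}
    (hc : c ∈ colSet G q (S.erase v)) (a : Fin q) :
    Function.update c v a ∈ colSet G q S ↔ a ∉ (nbrIn G v (S.erase v)).image c := by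
  simp only [mem_colSet, mem_erase] at hc
  simp only [mem_colSet, mem_image, mem_nbrIn, mem_erase, not_exists, not_and,
    Function.update_apply]
  constructor
  · rintro ⟨h, -⟩ w ⟨⟨hwv, hw⟩, hvw⟩ rfl
    simpa [hwv] using h v hv w hw hvw
  · intro ha
    refine ⟨fun u hu w hw huw => ?_, fun x hx => ?_⟩
    · have := huw.symm
      grind [G.ne_of_adj]
    · grind

lemma filter_update_zero_eq (hq : 0 < q) {S : Finset V} {v : V} (hv : v ∈ S)
    {c : V → Fin q} (hc : c ∈ colSet G q (S.erase v)) :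
    (colSet G q S).filter (fun d => Function.update d v ⟨0, hq⟩ = c) =
      (univ \ (nbrIn G v (S.erase v)).image c).image (Function.update c v) := by
  have hcv : c v = ⟨0, hq⟩ := Fin.ext (((mem_colSet G).1 hc).2 v (by simp))
  ext d
  rw [mem_filter, mem_image]
  simp only [mem_sdiff, mem_univ, true_and]
  constructor
  · rintro ⟨hd, rfl⟩
    refine ⟨d v, ?_, by simp⟩
    rw [← update_mem_colSet_iff G hv hc]
    simpa using hd
  · rintro ⟨a, ha, rfl⟩
    refine ⟨(update_mem_colSet_iff G hv hc a).2 ha, ?_⟩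
    rw [Function.update_idem, ← hcv, Function.update_eq_self]

lemma Zcol_eq_sum (hq : 0 < q) {S : Finset V} {v : V} (hv : v ∈ S) :
    Zcol G q S = ∑ c ∈ colSet G q (S.erase v), (q - ((nbrIn G v (S.erase v)).image c).card) := by
  rw [Zcol, card_eq_sum_card_fiberwise (fun c hc => update_zero_mem_colSet_erase G hq hc v)]
  refine sum_congr rfl fun c hc => ?_
  rw [filter_update_zero_eq G hq hv hc, card_image_of_injective _ (Function.update_injective c v),
    card_univ_sdiff, Fintype.card_fin]

lemma Zcol_pos {r : ℕ} (hdeg : ∀ v : V, (G.neighborSet v).ncard ≤ r) (hq : r < q)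
    (S : Finset V) : 0 < Zcol G q S := by
  induction S using Finset.induction_on with
  | empty => simp [Zcol_empty G (r.zero_le.trans_lt hq)]
  | insert v S hvS ih =>
    rw [Zcol_eq_sum G (r.zero_le.trans_lt hq) (mem_insert_self v S), erase_insert hvS]
    exact sum_pos (fun c _ => Nat.sub_pos_of_lt (card_image_nbrIn_lt G hdeg hq _ v c))
      (card_pos.1 ih)

lemma Zcol_eq_mul {r : ℕ} (hdeg : ∀ v : V, (G.neighborSet v).ncard ≤ r) (hq : r < q)
    {S : Finset V} {v : V} (hv : v ∈ S) :
    (Zcol G q S : ℝ) =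
      Zcol G q (S.erase v) * (q - expColors G q (S.erase v) (nbrIn G v S)) := by
  have hZ : (Zcol G q (S.erase v) : ℝ) ≠ 0 := by exact_mod_cast (Zcol_pos G hdeg hq _).ne'
  rw [Zcol_eq_sum G (r.zero_le.trans_lt hq) hv, nbrIn_erase_self, expColors, mul_sub,
    mul_div_cancel₀ _ hZ, Zcol, ← nsmul_eq_mul, ← sum_const, ← sum_sub_distrib, Nat.cast_sum]
  refine sum_congr rfl fun c _ => ?_
  rw [Nat.cast_sub (card_image_nbrIn_lt G hdeg hq _ v c).le]

end Coloring

section Deletion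

variable {V : Type*} [Fintype V] {n : ℕ} (e : Fin n ≃ V)

lemma mem_delSet {m : ℕ} {x : V} : x ∈ delSet e m ↔ m ≤ e.symm x := by
  simp [delSet, ← Equiv.eq_symm_apply]

lemma delSet_zero : delSet e 0 = univ := by
  ext x
  simp [mem_delSet]

lemma delSet_eq_empty : delSet e n = ∅ := by
  ext x
  simp [mem_delSet, (e.symm x).isLt]

lemma delSet_succ [DecidableEq V] (k : Fin n) : delSet e (k + 1) = (delSet e k).erase (e k) := by
  ext x
  rw [mem_erase, mem_delSet, mem_delSet, ne_eq, ← e.symm_apply_eq, Fin.ext_iff]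
  omega

end Deletion

lemma Zcol_univ_eq_mul_prod {V : Type*} [Fintype V] [DecidableEq V] (G : SimpleGraph V)
    {q r : ℕ} (hdeg : ∀ v : V, (G.neighborSet v).ncard ≤ r) (hq : r < q) {n : ℕ}
    (e : Fin n ≃ V) {m : ℕ} (hm : m ≤ n) :
    (Zcol G q univ : ℝ) = Zcol G q (delSet e m) *
      ∏ k ∈ univ.filter (fun k : Fin n => (k : ℕ) < m),
        ((q : ℝ) - expColors G q (delSet e (k + 1)) (nbrIn G (e k) (delSet e k))) := by
  induction m with
  | zero => simp [delSet_zero]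
  | succ m ih =>
    let k : Fin n := ⟨m, hm⟩
    have hfilter : univ.filter (fun i : Fin n => (i : ℕ) < m + 1) =
        insert k (univ.filter (fun i : Fin n => (i : ℕ) < m)) := by
      ext i
      simp only [mem_filter, mem_univ, true_and, mem_insert, Fin.ext_iff, k]
      omega
    have hk : e k ∈ delSet e m := (mem_delSet e).2 (by simp [k])
    rw [hfilter, prod_insert (by simp [k]), ih (by omega), Zcol_eq_mul G hdeg hq hk,
      ← delSet_succ e k]
    ring

/-- for a graph of maximum degree `r` and `q ≥ r+1`,
`Z(q, G) = ∏_{k=1}^n ( q − E_{G_k}[|C(N(v_k, G_{k-1}))|] )`. -/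
theorem statement3 {V : Type*} [Fintype V] (G : SimpleGraph V) (q r : ℕ)
    (hdeg : ∀ v : V, (G.neighborSet v).ncard ≤ r) (hq : r + 1 ≤ q)
    {n : ℕ} (e : Fin n ≃ V) :
    (Zcol G q Finset.univ : ℝ) =
      ∏ k : Fin n,
        ((q : ℝ) - expColors G q (delSet e ((k : ℕ) + 1)) (nbrIn G (e k) (delSet e (k : ℕ)))) := by
  classical
  rw [Zcol_univ_eq_mul_prod G hdeg hq e le_rfl, delSet_eq_empty, Zcol_empty G (by omega)]
  simp
end

section
/- Fix λ = 1 and 1 ≤ k ≤ 3, and define f : [1/2, 1]^k → ℝ by f(z_1,...,z_k) = 1/(1 + Π_{j=1}^k z_j). Then for every z in the domain [1/2, 8/9]^k, the ℓ_1 norm of the gradient of f at z, which equals (Π_j z_j · Σ_j z_j^{−1}) / (1 + Π_j z_j)^2, is strictly less than 0.9. -/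
/-- contraction estimate. For `1 ≤ k ≤ 3` and
`f(z₁,…,z_k) = 1/(1 + ∏ z_j)`, the ℓ₁-norm of the gradient of `f`, namely
`(∏_j z_j)(∑_j z_j⁻¹)/(1 + ∏_j z_j)²`, is strictly less than `0.9` on `[1/2, 8/9]^k`. -/
theorem statement6 (k : ℕ) (hk1 : 1 ≤ k) (hk3 : k ≤ 3) (z : Fin k → ℝ)
    (hz : ∀ j, z j ∈ Set.Icc (1 / 2 : ℝ) (8 / 9)) :
    (∏ j, z j) * (∑ j, (z j)⁻¹) / (1 + ∏ j, z j) ^ 2 < 9 / 10 := by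
  interval_cases k
  · obtain ⟨h1, h2⟩ := hz 0
    rw [Fin.prod_univ_one, Fin.sum_univ_one]
    have ha : (0:ℝ) < z 0 := by linarith
    rw [div_lt_iff₀ (by positivity)]
    rw [mul_inv_cancel₀ (ne_of_gt ha)]
    nlinarith [sq_nonneg (z 0)]
  · obtain ⟨a1, a2⟩ := hz 0
    obtain ⟨b1, b2⟩ := hz 1
    rw [Fin.prod_univ_two, Fin.sum_univ_two]
    have ha : (0:ℝ) < z 0 := by linarith
    have hb : (0:ℝ) < z 1 := by linarith
    rw [div_lt_iff₀ (by positivity)]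
    have : z 0 * z 1 * ((z 0)⁻¹ + (z 1)⁻¹) = z 1 + z 0 := by
      field_simp
    rw [this]
    nlinarith [mul_pos ha hb, sq_nonneg (z 0 * z 1)]
  · obtain ⟨a1, a2⟩ := hz 0
    obtain ⟨b1, b2⟩ := hz 1
    obtain ⟨c1, c2⟩ := hz 2
    rw [Fin.prod_univ_three, Fin.sum_univ_three]
    have ha : (0:ℝ) < z 0 := by linarith
    have hb : (0:ℝ) < z 1 := by linarith
    have hc : (0:ℝ) < z 2 := by linarith
    rw [div_lt_iff₀ (by positivity)]
    have : z 0 * z 1 * z 2 * ((z 0)⁻¹ + (z 1)⁻¹ + (z 2)⁻¹)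
        = z 1 * z 2 + z 0 * z 2 + z 0 * z 1 := by
      field_simp
    rw [this]
    have A1 : (0:ℝ) ≤ z 0 - 1/2 := by linarith
    have A2 : (0:ℝ) ≤ 8/9 - z 0 := by linarith
    have B1 : (0:ℝ) ≤ z 1 - 1/2 := by linarith
    have B2 : (0:ℝ) ≤ 8/9 - z 1 := by linarith
    have C1 : (0:ℝ) ≤ z 2 - 1/2 := by linarith
    have C2 : (0:ℝ) ≤ 8/9 - z 2 := by linarith
    nlinarith [sq_nonneg (z 0 * z 1 * z 2 - 2/5),
      mul_nonneg (mul_nonneg A1 B1) C1, mul_nonneg (mul_nonneg A1 B1) C2,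
      mul_nonneg (mul_nonneg A1 B2) C1, mul_nonneg (mul_nonneg A1 B2) C2,
      mul_nonneg (mul_nonneg A2 B1) C1, mul_nonneg (mul_nonneg A2 B1) C2,
      mul_nonneg (mul_nonneg A2 B2) C1, mul_nonneg (mul_nonneg A2 B2) C2]
end

section
/- For every t ≥ 2, every rooted tree T of depth at most t with maximum degree at most 4, and every two boundary conditions b_1, b_2 on the depth-t leaves, the uniform-measure probabilities that the root is excluded from a random independent set satisfy |P(v_0 ∉ I | b_1) − P(v_0 ∉ I | b_2)| ≤ (0.9)^{t−2}. -/
/-!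
At activity `1` the root-exclusion probability obeys the tree recursion
`Pout (node cs) = (1 + ∏ c ∈ cs, Pout c)⁻¹`, so every free vertex has `Pout ∈ [1/2, 1]`.
By the mean value theorem for the sup norm, `z ↦ (1 + ∏ i, z i)⁻¹` is Lipschitz on `[1/2, 1]ⁿ`
with constant `max (∑ i, ∏ j ≠ i, z j) / (1 + ∏ i, z i)²`, which is at most `9/10` for the
`n ≤ 3` children of a non-root vertex and at most `n / 2 ≤ 2` at the root. One level above the
boundary two probabilities in `[1/2, 1]` differ by at most `1/2`; this discrepancy then contracts
by `9/10` at each of the `t - 2` inner levels and grows by at most `2` at the root.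
-/

/-- A finite rooted tree in which some leaves carry a fixed boundary value:
`fixedLeaf b` is a boundary leaf whose membership in the independent set is forced
to be `b`, while `node cs` is a (free) vertex with the list `cs` of child subtrees;
in particular `node []` is a free leaf. -/
inductive RTree : Type
  | fixedLeaf : Bool → RTree
  | node : List RTree → RTree

namespace RTree

/-- `Z lam T = (Zout, Zin)`: the hard-core partition functions (activity `lam`) of the
rooted tree `T`, restricted to independent sets consistent with the boundary values,
and split according to whether the root is excluded (`Zout`) or included (`Zin`). -/
noncomputable def Z (lam : ℝ) : RTree → ℝ × ℝ
  | .fixedLeaf b => if b then (0, lam) else (1, 0)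
  | .node cs =>
      ((cs.attach.map (fun c => (Z lam c.1).1 + (Z lam c.1).2)).prod,
        lam * (cs.attach.map (fun c => (Z lam c.1).1)).prod)
  decreasing_by
    all_goals
      have := List.sizeOf_lt_of_mem c.2
      simp only [node.sizeOf_spec]
      omega

/-- The Gibbs probability (activity `lam`), conditioned on the boundary values, that the
root of `T` is *not* in a random independent set of `T`. -/
noncomputable def Pout (lam : ℝ) (T : RTree) : ℝ :=
  (Z lam T).1 / ((Z lam T).1 + (Z lam T).2)

/-- `okBC t T` : `T` has depth at most `t` and its fixed boundary leaves are exactly the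
vertices at depth exactly `t`. -/
inductive okBC : ℕ → RTree → Prop
  | leaf (b : Bool) : okBC 0 (.fixedLeaf b)
  | node {t : ℕ} {cs : List RTree} : (∀ c ∈ cs, okBC t c) → okBC (t + 1) (.node cs)

/-- `degOK r T` : viewed as a subtree hanging below a parent vertex, every vertex of `T`
has degree at most `r` (i.e. every vertex has at most `r - 1` children). -/
inductive degOK (r : ℕ) : RTree → Prop
  | leaf (b : Bool) : degOK r (.fixedLeaf b)
  | node {cs : List RTree} : cs.length ≤ r - 1 → (∀ c ∈ cs, degOK r c) →
      degOK r (.node cs)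

/-- `rootDegOK r T` : as a tree rooted at its root, `T` has maximum degree at most `r`
(the root has at most `r` children, and every other vertex at most `r - 1`). -/
inductive rootDegOK (r : ℕ) : RTree → Prop
  | leaf (b : Bool) : rootDegOK r (.fixedLeaf b)
  | node {cs : List RTree} : cs.length ≤ r → (∀ c ∈ cs, degOK r c) →
      rootDegOK r (.node cs)

/-- Two boundary-decorated trees have the same underlying tree, differing only in the
boundary values at the fixed leaves. -/
inductive SameShape : RTree → RTree → Prop
  | leaf (b₁ b₂ : Bool) : SameShape (.fixedLeaf b₁) (.fixedLeaf b₂)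
  | node {cs ds : List RTree} : List.Forall₂ SameShape cs ds →
      SameShape (.node cs) (.node ds)

end RTree

open Finset

theorem List.Forall₂.imp_of_mem {α β : Type*} {R S : α → β → Prop} {l₁ : List α} {l₂ : List β}
    (h : List.Forall₂ R l₁ l₂) (H : ∀ a ∈ l₁, ∀ b ∈ l₂, R a b → S a b) :
    List.Forall₂ S l₁ l₂ :=
  List.forall₂_iff_zip.2 ⟨h.length_eq, fun hab =>
    H _ (List.of_mem_zip hab).1 _ (List.of_mem_zip hab).2 ((List.forall₂_iff_zip.1 h).2 hab)⟩

section GradientBound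

variable {ι : Type*} [Fintype ι] [DecidableEq ι]

theorem hasFDerivAt_inv_one_add_prod (x : ι → ℝ) (hx : 1 + ∏ i, x i ≠ 0) :
    HasFDerivAt (fun y : ι → ℝ => (1 + ∏ i, y i)⁻¹)
      (-((1 + ∏ i, x i) ^ 2)⁻¹ •
        ∑ i, (∏ j ∈ univ.erase i, x j) • ContinuousLinearMap.proj (R := ℝ) i) x := by
  have hg : HasDerivAt (fun p : ℝ => (1 + p)⁻¹) (-((1 + ∏ i, x i) ^ 2)⁻¹) (∏ i, x i) := by
    have := ((hasDerivAt_id' (∏ i, x i)).const_add 1).fun_inv hx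
    rwa [neg_div, one_div] at this
  exact hg.comp_hasFDerivAt x hasFDerivAt_finsetProd

theorem norm_gradient_inv_one_add_prod_le {z : ι → ℝ} (hz : ∀ i, 0 ≤ z i) :
    ‖-((1 + ∏ i, z i) ^ 2)⁻¹ • ∑ i, (∏ j ∈ univ.erase i, z j) •
        ContinuousLinearMap.proj (R := ℝ) (φ := fun _ : ι => ℝ) i‖ ≤
      (∑ i, ∏ j ∈ univ.erase i, z j) / (1 + ∏ i, z i) ^ 2 := by
  have hP : 0 < 1 + ∏ i, z i := by linarith [prod_nonneg fun i (_ : i ∈ univ) => hz i]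
  have hE (i : ι) : 0 ≤ ∏ j ∈ univ.erase i, z j := prod_nonneg fun j _ => hz j
  refine ContinuousLinearMap.opNorm_le_bound _
    (div_nonneg (sum_nonneg fun i _ => hE i) (by positivity)) fun v => ?_
  calc ‖(-((1 + ∏ i, z i) ^ 2)⁻¹ • ∑ i, (∏ j ∈ univ.erase i, z j) •
        ContinuousLinearMap.proj (R := ℝ) (φ := fun _ : ι => ℝ) i) v‖
      = |∑ i, (∏ j ∈ univ.erase i, z j) * v i| / (1 + ∏ i, z i) ^ 2 := by
        simp [div_eq_inv_mul]
    _ ≤ (∑ i, ∏ j ∈ univ.erase i, z j) * ‖v‖ / (1 + ∏ i, z i) ^ 2 := by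
        gcongr
        refine (abs_sum_le_sum_abs _ _).trans ?_
        rw [sum_mul]
        gcongr with i
        rw [abs_mul, abs_of_nonneg (hE i)]
        exact mul_le_mul_of_nonneg_left (norm_le_pi_norm v i) (hE i)
    _ = _ := by ring

theorem abs_inv_one_add_prod_sub_le {C δ : ℝ} {x y : ι → ℝ}
    (hC : ∀ z : ι → ℝ, (∀ i, z i ∈ Set.Icc (1 / 2) 1) →
      ∑ i, ∏ j ∈ univ.erase i, z j ≤ C * (1 + ∏ i, z i) ^ 2)
    (hx : ∀ i, x i ∈ Set.Icc (1 / 2) 1) (hy : ∀ i, y i ∈ Set.Icc (1 / 2) 1)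
    (hδ : 0 ≤ δ) (hxy : ∀ i, |x i - y i| ≤ δ) :
    |(1 + ∏ i, x i)⁻¹ - (1 + ∏ i, y i)⁻¹| ≤ C * δ := by
  set box : Set (ι → ℝ) := Set.univ.pi fun _ => Set.Icc (1 / 2) 1
  have hnonneg (z : ι → ℝ) (hz : z ∈ box) (i : ι) : 0 ≤ z i := by linarith [(hz i trivial).1]
  have hpos (z : ι → ℝ) (hz : z ∈ box) : 0 < 1 + ∏ i, z i := by
    linarith [prod_nonneg fun i (_ : i ∈ univ) => hnonneg z hz i]
  have hderiv (z : ι → ℝ) (hz : z ∈ box) := hasFDerivAt_inv_one_add_prod z (hpos z hz).ne'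
  have hbound (z : ι → ℝ) (hz : z ∈ box) :=
    (norm_gradient_inv_one_add_prod_le (hnonneg z hz)).trans
      ((div_le_iff₀ (pow_pos (hpos z hz) 2)).2 (hC z fun i => hz i trivial))
  have hx' : x ∈ box := Set.mem_univ_pi.2 hx
  have hmvt := (convex_pi fun _ _ => convex_Icc _ _).norm_image_sub_le_of_norm_hasFDerivWithin_le
    (fun z hz => (hderiv z hz).hasFDerivWithinAt) hbound (Set.mem_univ_pi.2 hy) hx'
  have hC0 : 0 ≤ C := (norm_nonneg _).trans (hbound x hx')
  have hnorm : ‖x - y‖ ≤ δ := (pi_norm_le_iff_of_nonneg hδ).2 fun i => by simpa using hxy i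
  rw [Real.norm_eq_abs] at hmvt
  exact hmvt.trans (mul_le_mul_of_nonneg_left hnorm hC0)

theorem sum_prod_erase_le_card_div_two {z : ι → ℝ} (hz : ∀ i, z i ∈ Set.Icc (1 / 2) 1) :
    ∑ i, ∏ j ∈ univ.erase i, z j ≤ Fintype.card ι / 2 * (1 + ∏ i, z i) ^ 2 := by
  have hP : 0 ≤ ∏ i, z i := prod_nonneg fun i _ => by linarith [(hz i).1]
  have hterm (i : ι) : ∏ j ∈ univ.erase i, z j ≤ 2 * ∏ i, z i := by
    have hE : 0 ≤ ∏ j ∈ univ.erase i, z j := prod_nonneg fun j _ => by linarith [(hz j).1]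
    rw [← mul_prod_erase univ z (mem_univ i)]
    nlinarith [(hz i).1]
  calc ∑ i, ∏ j ∈ univ.erase i, z j ≤ ∑ _i : ι, 2 * ∏ i, z i := sum_le_sum fun i _ => hterm i
    _ = Fintype.card ι * (2 * ∏ i, z i) := by simp
    _ ≤ Fintype.card ι / 2 * (1 + ∏ i, z i) ^ 2 := by
      nlinarith [mul_nonneg (Nat.cast_nonneg (α := ℝ) (Fintype.card ι)) (sq_nonneg (1 - ∏ i, z i))]

end GradientBound

theorem sum_prod_erase_le_of_le_three {n : ℕ} (hn : n ≤ 3) {z : Fin n → ℝ}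
    (hz : ∀ i, z i ∈ Set.Icc (1 / 2) 1) :
    ∑ i, ∏ j ∈ univ.erase i, z j ≤ 9 / 10 * (1 + ∏ i, z i) ^ 2 := by
  -- Tight at `(1/2, 1, 1)`; for `n = 3` it is the sum of `(1 - x)(1 - y)(1 - z) ≥ 0`
  -- and `4 (x - 1/2)(y - 1/2)(z - 1/2) ≥ 0`.
  have hsym : ∑ i, ∏ j ∈ univ.erase i, z j ≤ 1 / 2 + 3 * ∏ i, z i := by
    interval_cases n
    · norm_num
    · rw [Fin.sum_univ_one, Fin.prod_univ_one, show univ.erase (0 : Fin 1) = ∅ by decide,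
        prod_empty]
      linarith [(hz 0).1]
    · obtain ⟨⟨h₀, h₀'⟩, ⟨h₁, h₁'⟩⟩ := And.intro (hz 0) (hz 1)
      rw [Fin.sum_univ_two, Fin.prod_univ_two, show univ.erase (0 : Fin 2) = {1} by decide,
        show univ.erase (1 : Fin 2) = {0} by decide, prod_singleton, prod_singleton]
      nlinarith [mul_nonneg (sub_nonneg.2 h₀') (sub_nonneg.2 h₁')]
    · obtain ⟨⟨h₀, h₀'⟩, ⟨h₁, h₁'⟩, ⟨h₂, h₂'⟩⟩ := And.intro (hz 0) (And.intro (hz 1) (hz 2))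
      rw [Fin.sum_univ_three, Fin.prod_univ_three, show univ.erase (0 : Fin 3) = {1, 2} by decide,
        show univ.erase (1 : Fin 3) = {0, 2} by decide,
        show univ.erase (2 : Fin 3) = {0, 1} by decide,
        prod_pair (by decide), prod_pair (by decide), prod_pair (by decide)]
      nlinarith [mul_nonneg (mul_nonneg (sub_nonneg.2 h₀') (sub_nonneg.2 h₁')) (sub_nonneg.2 h₂'),
        mul_nonneg (mul_nonneg (sub_nonneg.2 h₀) (sub_nonneg.2 h₁)) (sub_nonneg.2 h₂)]
  -- `9/10 (1 + p)² - (1/2 + 3p) = 9/10 (p - 2/3)²`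
  nlinarith [sq_nonneg (∏ i, z i - 2 / 3)]

namespace RTree

theorem Z_node (cs : List RTree) :
    Z 1 (.node cs) = (∏ i : Fin cs.length, ((Z 1 cs[i]).1 + (Z 1 cs[i]).2),
      ∏ i : Fin cs.length, (Z 1 cs[i]).1) := by
  rw [Z]
  simp [← List.ofFn_getElem_eq_map, List.prod_ofFn]

theorem Z_nonneg_and_add_pos :
    ∀ T : RTree, 0 ≤ (Z 1 T).1 ∧ 0 ≤ (Z 1 T).2 ∧ 0 < (Z 1 T).1 + (Z 1 T).2
  | .fixedLeaf b => by cases b <;> norm_num [Z]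
  | .node cs => by
    have ih := fun c (_ : c ∈ cs) => Z_nonneg_and_add_pos c
    have hout : 0 < ∏ i : Fin cs.length, ((Z 1 cs[i]).1 + (Z 1 cs[i]).2) :=
      prod_pos fun i _ => (ih _ (List.getElem_mem _)).2.2
    have hin : 0 ≤ ∏ i : Fin cs.length, (Z 1 cs[i]).1 :=
      prod_nonneg fun i _ => (ih _ (List.getElem_mem _)).1
    rw [Z_node]
    exact ⟨hout.le, hin, by positivity⟩

theorem Pout_mem_Icc (T : RTree) : Pout 1 T ∈ Set.Icc 0 1 := by
  obtain ⟨hout, hin, hsum⟩ := Z_nonneg_and_add_pos T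
  exact ⟨div_nonneg hout hsum.le, (div_le_one hsum).2 (by linarith)⟩

theorem Pout_node (cs : List RTree) :
    Pout 1 (.node cs) = (1 + ∏ i : Fin cs.length, Pout 1 cs[i])⁻¹ := by
  have hout : 0 < ∏ i : Fin cs.length, ((Z 1 cs[i]).1 + (Z 1 cs[i]).2) :=
    prod_pos fun i _ => (Z_nonneg_and_add_pos _).2.2
  simp only [Pout, Z_node, prod_div_distrib]
  field_simp

theorem Pout_node_mem_Icc (cs : List RTree) : Pout 1 (.node cs) ∈ Set.Icc (1 / 2) 1 := by
  have h₀ : 0 ≤ ∏ i : Fin cs.length, Pout 1 cs[i] := prod_nonneg fun i _ => (Pout_mem_Icc _).1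
  have h₁ : ∏ i : Fin cs.length, Pout 1 cs[i] ≤ 1 :=
    prod_le_one (fun i _ => (Pout_mem_Icc _).1) fun i _ => (Pout_mem_Icc _).2
  rw [Pout_node]
  constructor
  · rw [le_inv_comm₀ (by norm_num) (by positivity)]
    linarith
  · exact inv_le_one_of_one_le₀ (by linarith)

theorem Pout_mem_Icc_of_okBC_succ {t : ℕ} {T : RTree} (h : okBC (t + 1) T) :
    Pout 1 T ∈ Set.Icc (1 / 2) 1 := by
  cases h
  exact Pout_node_mem_Icc _

theorem abs_Pout_node_sub_le {C δ : ℝ} {cs ds : List RTree}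
    (hC : ∀ z : Fin cs.length → ℝ, (∀ i, z i ∈ Set.Icc (1 / 2) 1) →
      ∑ i, ∏ j ∈ univ.erase i, z j ≤ C * (1 + ∏ i, z i) ^ 2)
    (hcs : ∀ c ∈ cs, Pout 1 c ∈ Set.Icc (1 / 2) 1) (hds : ∀ d ∈ ds, Pout 1 d ∈ Set.Icc (1 / 2) 1)
    (hδ : 0 ≤ δ) (h : List.Forall₂ (fun c d => |Pout 1 c - Pout 1 d| ≤ δ) cs ds) :
    |Pout 1 (.node cs) - Pout 1 (.node ds)| ≤ C * δ := by
  have hlen := h.length_eq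
  rw [Pout_node, Pout_node, ← Fin.prod_congr' (fun i => Pout 1 ds[i]) hlen]
  exact abs_inv_one_add_prod_sub_le hC (fun i => hcs _ (List.getElem_mem _))
    (fun i => hds _ (List.getElem_mem _)) hδ fun i => h.get i.2 (hlen ▸ i.2)

theorem abs_Pout_sub_le_of_degOK (u : ℕ) {T₁ T₂ : RTree} (hs : SameShape T₁ T₂)
    (h₁ : okBC (u + 1) T₁) (h₂ : okBC (u + 1) T₂) (hd : degOK 4 T₁) :
    |Pout 1 T₁ - Pout 1 T₂| ≤ (9 / 10) ^ u / 2 := by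
  induction u generalizing T₁ T₂ with
  | zero =>
    obtain ⟨hl₁, hu₁⟩ := Pout_mem_Icc_of_okBC_succ h₁
    obtain ⟨hl₂, hu₂⟩ := Pout_mem_Icc_of_okBC_succ h₂
    rw [abs_sub_le_iff]
    constructor <;> linarith
  | succ u ih =>
    cases h₁ with | node hc₁ =>
    cases h₂ with | node hc₂ =>
    cases hs with | node hs =>
    cases hd with | node hlen hd =>
    calc _ ≤ 9 / 10 * ((9 / 10) ^ u / 2) :=
          abs_Pout_node_sub_le (fun _ hz => sum_prod_erase_le_of_le_three (by omega) hz)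
            (fun c hc => Pout_mem_Icc_of_okBC_succ (hc₁ c hc))
            (fun d hd => Pout_mem_Icc_of_okBC_succ (hc₂ d hd)) (by positivity)
            (hs.imp_of_mem fun c hc d hd' hcd => ih hcd (hc₁ c hc) (hc₂ d hd') (hd c hc))
      _ = (9 / 10) ^ (u + 1) / 2 := by ring

end RTree

open RTree in
theorem statement8_general (t : ℕ) (ht : 2 ≤ t) (T₁ T₂ : RTree) (hshape : SameShape T₁ T₂)
    (hbc₁ : okBC t T₁) (hbc₂ : okBC t T₂)
    (hdeg₁ : rootDegOK 4 T₁) :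
    |Pout 1 T₁ - Pout 1 T₂| ≤ (9 / 10 : ℝ) ^ (t - 2) := by
  obtain ⟨u, rfl⟩ : ∃ u, t = u + 2 := ⟨t - 2, by omega⟩
  cases hbc₁ with | @node _ cs hc₁ =>
  cases hbc₂ with | node hc₂ =>
  cases hshape with | node hs =>
  cases hdeg₁ with | node hlen hd =>
  have hroot (z : Fin cs.length → ℝ) (hz : ∀ i, z i ∈ Set.Icc (1 / 2) 1) :
      ∑ i, ∏ j ∈ univ.erase i, z j ≤ 2 * (1 + ∏ i, z i) ^ 2 :=
    (sum_prod_erase_le_card_div_two hz).trans <| by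
      gcongr
      rw [Fintype.card_fin, div_le_iff₀ two_pos]
      exact_mod_cast (by omega : cs.length ≤ 2 * 2)
  calc _ ≤ 2 * ((9 / 10) ^ u / 2) :=
        abs_Pout_node_sub_le hroot (fun c hc => Pout_mem_Icc_of_okBC_succ (hc₁ c hc))
          (fun d hd => Pout_mem_Icc_of_okBC_succ (hc₂ d hd)) (by positivity)
          (hs.imp_of_mem fun c hc d hd' hcd =>
            abs_Pout_sub_le_of_degOK u hcd (hc₁ c hc) (hc₂ d hd') (hd c hc))
    _ = (9 / 10) ^ (u + 2 - 2) := by rw [Nat.add_sub_cancel]; ring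

open RTree in
/-- correlation decay. For every `t ≥ 2` and every rooted tree of depth at
most `t` with maximum degree at most `4`, equipped with two boundary conditions `b₁, b₂`
on its depth-`t` leaves (i.e. two boundary-decorated trees of the same shape), the root
exclusion probabilities under the uniform measure differ by at most `(0.9)^(t-2)`. -/
theorem statement8 (t : ℕ) (ht : 2 ≤ t) (T₁ T₂ : RTree) (hshape : SameShape T₁ T₂)
    (hbc₁ : okBC t T₁) (hbc₂ : okBC t T₂)
    (hdeg₁ : rootDegOK 4 T₁) (hdeg₂ : rootDegOK 4 T₂) :
    |Pout 1 T₁ - Pout 1 T₂| ≤ (9 / 10 : ℝ) ^ (t - 2) :=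
  statement8_general t ht T₁ T₂ hshape hbc₁ hbc₂ hdeg₁
end

section
/- Let r ≥ 3 and λ > 0 with λ < (r−1)^{r−1}/(r−2)^r. Then the equation x = 1/(1 + λ x^{r−1}) has a unique solution x in (0,1], and moreover the function F(x) = 1/(1 + λ x^{r−1}) restricted to a suitable invariant interval around this fixed point is a contraction, so that iterates of F from any starting point in (0,1] converge to x. -/
/-!
Write `F z = 1 / (1 + λ z^d)` with `d = r - 1`. `F` is a decreasing self-map of `[0, 1]`, so
`F ∘ F` is increasing, every orbit of `F ∘ F` is monotone and converges to a fixed point of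
`F ∘ F`, and everything reduces to showing that `F` has no genuine 2-cycle.

For this use the potential `Φ` with `Φ' t = 1 / (t √(1 - t))`: at `t` the conjugate map
`Φ ∘ F ∘ Φ⁻¹` has derivative of modulus `√(λ d² t^d (1 - t) / (1 + λ t^d))`, which is `< 1`
below the threshold because, by weighted AM-GM, `t^d (d² (1 - t) - 1)` never exceeds
`(d - 1)^(d + 1) / d^d`. Hence `Φ ∘ F + Φ` is strictly increasing on `(0, 1)`, whereas it takes
the same value at both points of a 2-cycle.
-/

open Filter Set Function Topology Real

theorem tendsto_of_tendsto_even_odd {α : Type*} {l : Filter α} {u : ℕ → α}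
    (h0 : Tendsto (fun k => u (2 * k)) atTop l) (h1 : Tendsto (fun k => u (2 * k + 1)) atTop l) :
    Tendsto u atTop l := by
  intro s hs
  obtain ⟨N₀, hN₀⟩ := eventually_atTop.1 (h0 hs)
  obtain ⟨N₁, hN₁⟩ := eventually_atTop.1 (h1 hs)
  refine eventually_atTop.2 ⟨2 * (N₀ + N₁), fun n hn => ?_⟩
  obtain ⟨k, rfl | rfl⟩ := n.even_or_odd'
  · exact hN₀ k (by omega)
  · exact hN₁ k (by omega)

section IterateOn

variable {α : Type*} [LinearOrder α] {f : α → α} {s : Set α} {x : α}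

theorem MonotoneOn.monotone_iterate_of_le_map (hf : MonotoneOn f s) (hs : MapsTo f s s)
    (hx : x ∈ s) (hle : x ≤ f x) : Monotone fun n => f^[n] x :=
  monotone_nat_of_le_succ fun n => by
    induction n with
    | zero => exact hle
    | succ n ih =>
      simpa only [iterate_succ_apply'] using hf (hs.iterate n hx) (hs.iterate (n + 1) hx) ih

theorem MonotoneOn.antitone_iterate_of_map_le (hf : MonotoneOn f s) (hs : MapsTo f s s)
    (hx : x ∈ s) (hle : f x ≤ x) : Antitone fun n => f^[n] x :=
  antitone_nat_of_succ_le fun n => by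
    induction n with
    | zero => exact hle
    | succ n ih =>
      simpa only [iterate_succ_apply'] using hf (hs.iterate (n + 1) hx) (hs.iterate n hx) ih

theorem AntitoneOn.eq_of_isFixedPt (hf : AntitoneOn f s) {y : α} (hx : x ∈ s) (hy : y ∈ s)
    (hfx : IsFixedPt f x) (hfy : IsFixedPt f y) : x = y := by
  rcases le_total x y with h | h
  · exact le_antisymm h (by simpa only [hfx.eq, hfy.eq] using hf hx hy h)
  · exact le_antisymm (by simpa only [hfx.eq, hfy.eq] using hf hy hx h) h

end IterateOn

section IterateIcc

variable {α : Type*} [ConditionallyCompleteLinearOrder α] [TopologicalSpace α] [OrderTopology α]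
  {f : α → α} {a b : α}

theorem exists_isFixedPt_tendsto_iterate_of_monotoneOn (hmaps : MapsTo f (Icc a b) (Icc a b))
    (hmono : MonotoneOn f (Icc a b)) (hcont : ContinuousOn f (Icc a b)) {x : α}
    (hx : x ∈ Icc a b) :
    ∃ y ∈ Icc a b, IsFixedPt f y ∧ Tendsto (fun n => f^[n] x) atTop (𝓝 y) := by
  have horbit : ∀ n, f^[n] x ∈ Icc a b := fun n => hmaps.iterate n hx
  obtain ⟨y, hy⟩ : ∃ y, Tendsto (fun n => f^[n] x) atTop (𝓝 y) := by
    rcases le_total x (f x) with h | h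
    · exact ⟨_, tendsto_atTop_ciSup (hmono.monotone_iterate_of_le_map hmaps hx h)
        ⟨b, forall_mem_range.2 fun n => (horbit n).2⟩⟩
    · exact ⟨_, tendsto_atTop_ciInf (hmono.antitone_iterate_of_map_le hmaps hx h)
        ⟨a, forall_mem_range.2 fun n => (horbit n).1⟩⟩
  have hyS : y ∈ Icc a b := isClosed_Icc.mem_of_tendsto hy (Eventually.of_forall horbit)
  refine ⟨y, hyS, tendsto_nhds_unique ?_ ((tendsto_add_atTop_iff_nat 1).2 hy), hy⟩
  simp only [iterate_succ_apply']
  exact (hcont y hyS).tendsto.comp (tendsto_nhdsWithin_iff.2 ⟨hy, Eventually.of_forall horbit⟩)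

theorem tendsto_iterate_of_antitoneOn (hmaps : MapsTo f (Icc a b) (Icc a b))
    (hanti : AntitoneOn f (Icc a b)) (hcont : ContinuousOn f (Icc a b))
    (hcycle : ∀ p ∈ Icc a b, IsFixedPt f^[2] p → IsFixedPt f p) {x y : α}
    (hx : x ∈ Icc a b) (hfx : IsFixedPt f x) (hy : y ∈ Icc a b) :
    Tendsto (fun n => f^[n] y) atTop (𝓝 x) := by
  have hlim : ∀ z ∈ Icc a b, Tendsto (fun k => (f^[2])^[k] z) atTop (𝓝 x) := by
    intro z hz
    obtain ⟨L, hL, hfL, hzL⟩ := exists_isFixedPt_tendsto_iterate_of_monotoneOn (hmaps.iterate 2)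
      (hanti.comp hanti hmaps) (hcont.comp hcont hmaps) hz
    rwa [hanti.eq_of_isFixedPt hL hx (hcycle L hL hfL) hfx] at hzL
  refine tendsto_of_tendsto_even_odd ?_ ?_
  · simpa only [iterate_mul] using hlim y hy
  · simpa only [iterate_add_apply, iterate_mul, iterate_one] using hlim (f y) (hmaps hy)

end IterateIcc

theorem pow_mul_le_mean_pow (d : ℕ) {u v : ℝ} (hu : 0 ≤ u) (hv : 0 ≤ v) :
    u ^ d * v ≤ ((d * u + v) / (d + 1)) ^ (d + 1) := by
  have hd : (0 : ℝ) < d + 1 := by positivity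
  have hw : (d : ℝ) / (d + 1) + 1 / (d + 1) = 1 := by field_simp
  have hmean := geom_mean_le_arith_mean2_weighted (by positivity) (by positivity) hu hv hw
  have hmean' : d / (d + 1) * u + 1 / (d + 1) * v = (d * u + v) / (d + 1) := by field_simp
  rw [hmean'] at hmean
  calc u ^ d * v = (u ^ ((d : ℝ) / (d + 1)) * v ^ (1 / ((d : ℝ) + 1))) ^ ((d : ℝ) + 1) := by
        rw [mul_rpow (by positivity) (by positivity), ← rpow_mul hu, ← rpow_mul hv,
          div_mul_cancel₀ _ hd.ne', one_div_mul_cancel hd.ne', rpow_natCast, rpow_one]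
    _ ≤ ((d * u + v) / (d + 1)) ^ ((d : ℝ) + 1) := by gcongr
    _ = ((d * u + v) / (d + 1)) ^ (d + 1) := by norm_cast

theorem mul_pow_mul_sub_le {d : ℕ} (hd : 1 ≤ d) {t : ℝ} (ht : 0 ≤ t) :
    (d * t) ^ d * (d ^ 2 * (1 - t) - 1) ≤ ((d : ℝ) - 1) ^ (d + 1) := by
  have hd' : (1 : ℝ) ≤ d := by exact_mod_cast hd
  rcases le_total (d ^ 2 * (1 - t) - 1) 0 with hv | hv
  · calc (d * t) ^ d * (d ^ 2 * (1 - t) - 1) ≤ 0 :=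
          mul_nonpos_of_nonneg_of_nonpos (by positivity) hv
      _ ≤ ((d : ℝ) - 1) ^ (d + 1) := pow_nonneg (by linarith) _
  · have hmean : (d * (d * t) + (d ^ 2 * (1 - t) - 1)) / (d + 1) = (d : ℝ) - 1 := by
      field_simp; ring
    simpa only [hmean] using pow_mul_le_mean_pow d (u := d * t) (by positivity) hv

noncomputable def hardcoreMap (lam : ℝ) (d : ℕ) (z : ℝ) : ℝ := 1 / (1 + lam * z ^ d)

section HardcoreMap

variable {lam : ℝ} {d : ℕ} {t : ℝ}

theorem one_add_mul_pow_pos (hlam : 0 ≤ lam) (ht : 0 ≤ t) : 0 < 1 + lam * t ^ d := by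
  positivity

theorem hardcoreMap_mul_one_add (hlam : 0 ≤ lam) (ht : 0 ≤ t) :
    hardcoreMap lam d t * (1 + lam * t ^ d) = 1 :=
  one_div_mul_cancel (one_add_mul_pow_pos hlam ht).ne'

theorem hardcoreMap_pos (hlam : 0 ≤ lam) (ht : 0 ≤ t) : 0 < hardcoreMap lam d t :=
  one_div_pos.2 (one_add_mul_pow_pos hlam ht)

theorem hardcoreMap_lt_one (hlam : 0 < lam) (ht : 0 < t) : hardcoreMap lam d t < 1 :=
  (div_lt_one (one_add_mul_pow_pos hlam.le ht.le)).2 (lt_add_of_pos_right 1 (by positivity))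

theorem mapsTo_hardcoreMap (hlam : 0 ≤ lam) : MapsTo (hardcoreMap lam d) (Icc 0 1) (Icc 0 1) :=
  fun _ ht => ⟨(hardcoreMap_pos hlam ht.1).le,
    div_le_one_of_le₀ (le_add_of_nonneg_right (by have := ht.1; positivity))
      (one_add_mul_pow_pos hlam ht.1).le⟩

theorem antitoneOn_hardcoreMap (hlam : 0 ≤ lam) : AntitoneOn (hardcoreMap lam d) (Ici 0) :=
  fun s hs t _ hst => one_div_le_one_div_of_le (one_add_mul_pow_pos hlam hs) (by gcongr)

theorem continuousOn_hardcoreMap (hlam : 0 ≤ lam) : ContinuousOn (hardcoreMap lam d) (Ici 0) :=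
  continuousOn_const.div (by fun_prop) fun _ ht => (one_add_mul_pow_pos hlam ht).ne'

theorem hasDerivAt_hardcoreMap (hlam : 0 ≤ lam) (ht : 0 ≤ t) :
    HasDerivAt (hardcoreMap lam d) (-(lam * d * t ^ (d - 1)) * hardcoreMap lam d t ^ 2) t := by
  have hpos := one_add_mul_pow_pos (d := d) hlam ht
  refine ((hasDerivAt_const t 1).div (((hasDerivAt_pow d t).const_mul lam).const_add 1)
    hpos.ne').congr_deriv ?_
  simp only [hardcoreMap]
  field_simp
  ring

theorem isFixedPt_hardcoreMap_iff (hlam : 0 ≤ lam) (ht : 0 ≤ t) :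
    IsFixedPt (hardcoreMap lam d) t ↔ t * (1 + lam * t ^ d) = 1 := by
  rw [IsFixedPt, hardcoreMap, div_eq_iff (one_add_mul_pow_pos hlam ht).ne', eq_comm]

end HardcoreMap

noncomputable def potential (t : ℝ) : ℝ := log (1 - √(1 - t)) - log (1 + √(1 - t))

theorem hasDerivAt_potential {t : ℝ} (h0 : 0 < t) (h1 : t < 1) :
    HasDerivAt potential (1 / (t * √(1 - t))) t := by
  have hs0 : 0 < √(1 - t) := sqrt_pos.2 (by linarith)
  have hs1 : √(1 - t) < 1 := (sqrt_lt' one_pos).2 (by linarith)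
  have hsq : √(1 - t) ^ 2 = 1 - t := sq_sqrt (by linarith)
  have hs : HasDerivAt (fun u => √(1 - u)) (-(1 / (2 * √(1 - t)))) t := by
    convert ((hasDerivAt_id' t).const_sub 1).sqrt (by linarith) using 1
    ring
  refine (((hs.const_sub 1).log (by linarith)).sub ((hs.const_add 1).log (by linarith)) :
    HasDerivAt potential _ t).congr_deriv ?_
  have hs1' : 1 - √(1 - t) ≠ 0 := by linarith
  field_simp
  linear_combination 2 * hsq

section Threshold

variable {lam : ℝ} {d : ℕ}

theorem mul_pow_mul_sub_lt_one (hd : 2 ≤ d) (hlam : 0 < lam)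
    (hthr : lam < (d : ℝ) ^ d / ((d : ℝ) - 1) ^ (d + 1)) {t : ℝ} (ht : 0 ≤ t) :
    lam * t ^ d * (d ^ 2 * (1 - t) - 1) < 1 := by
  have hd' : (2 : ℝ) ≤ d := by exact_mod_cast hd
  rcases le_total (d ^ 2 * (1 - t) - 1) 0 with hv | hv
  · have : lam * t ^ d * (d ^ 2 * (1 - t) - 1) ≤ 0 :=
      mul_nonpos_of_nonneg_of_nonpos (by positivity) hv
    linarith
  · have hT : lam * ((d : ℝ) - 1) ^ (d + 1) < d ^ d :=
      (lt_div_iff₀ (pow_pos (by linarith) _)).1 hthr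
    have hB := mul_pow_mul_sub_le (d := d) (by omega) ht
    rw [mul_pow] at hB
    have hdd : (0 : ℝ) < d ^ d := by positivity
    refine (mul_lt_mul_iff_of_pos_left hdd).1 ?_
    calc (d : ℝ) ^ d * (lam * t ^ d * (d ^ 2 * (1 - t) - 1))
        = lam * ((d : ℝ) ^ d * t ^ d * (d ^ 2 * (1 - t) - 1)) := by ring
      _ ≤ lam * ((d : ℝ) - 1) ^ (d + 1) := mul_le_mul_of_nonneg_left hB hlam.le
      _ < d ^ d * 1 := by rw [mul_one]; exact hT

theorem mul_pow_mul_sqrt_lt_sqrt_one_sub_hardcoreMap (hd : 2 ≤ d) (hlam : 0 < lam)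
    (hthr : lam < (d : ℝ) ^ d / ((d : ℝ) - 1) ^ (d + 1)) {t : ℝ} (ht0 : 0 < t) (ht1 : t < 1) :
    lam * d * t ^ d * hardcoreMap lam d t * √(1 - t) < √(1 - hardcoreMap lam d t) := by
  set F := hardcoreMap lam d t
  have hF1 : F < 1 := hardcoreMap_lt_one hlam ht0
  have hFmul : F * (1 + lam * t ^ d) = 1 := hardcoreMap_mul_one_add hlam.le ht0.le
  have hF0 : 0 < F := hardcoreMap_pos hlam.le ht0.le
  have hpos : 0 < lam * t ^ d * F := by positivity
  have hstretch : lam * d ^ 2 * t ^ d * (1 - t) * F < 1 := by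
    nlinarith [mul_lt_mul_of_pos_right (mul_pow_mul_sub_lt_one hd hlam hthr ht0.le) hF0]
  refine lt_of_pow_lt_pow_left₀ 2 (sqrt_nonneg _) ?_
  rw [mul_pow, sq_sqrt (by linarith), sq_sqrt (by linarith)]
  calc (lam * d * t ^ d * F) ^ 2 * (1 - t)
      = (lam * t ^ d * F) * (lam * d ^ 2 * t ^ d * (1 - t) * F) := by ring
    _ < (lam * t ^ d * F) * 1 := mul_lt_mul_of_pos_left hstretch hpos
    _ = 1 - F := by linear_combination hFmul

theorem strictMonoOn_potential_hardcoreMap_add_potential (hd : 2 ≤ d) (hlam : 0 < lam)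
    (hthr : lam < (d : ℝ) ^ d / ((d : ℝ) - 1) ^ (d + 1)) :
    StrictMonoOn (fun t => potential (hardcoreMap lam d t) + potential t) (Ioo 0 1) := by
  have hderiv : ∀ t ∈ Ioo (0 : ℝ) 1, HasDerivAt
      (fun t => potential (hardcoreMap lam d t) + potential t)
      (1 / (hardcoreMap lam d t * √(1 - hardcoreMap lam d t)) *
          (-(lam * d * t ^ (d - 1)) * hardcoreMap lam d t ^ 2) + 1 / (t * √(1 - t))) t :=
    fun t ht => ((hasDerivAt_potential (hardcoreMap_pos hlam.le ht.1.le)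
      (hardcoreMap_lt_one hlam ht.1)).comp t (hasDerivAt_hardcoreMap hlam.le ht.1.le)).add
      (hasDerivAt_potential ht.1 ht.2)
  refine strictMonoOn_of_deriv_pos (convex_Ioo 0 1)
    (fun t ht => (hderiv t ht).continuousAt.continuousWithinAt) fun t ht => ?_
  rw [interior_Ioo] at ht
  obtain ⟨ht0, ht1⟩ := ht
  have hlt := mul_pow_mul_sqrt_lt_sqrt_one_sub_hardcoreMap hd hlam hthr ht0 ht1
  rw [(hderiv t ⟨ht0, ht1⟩).deriv]
  set F := hardcoreMap lam d t
  have hF0 : 0 < F := hardcoreMap_pos hlam.le ht0.le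
  have hσ0 : 0 < √(1 - F) := sqrt_pos.2 (by linarith [hardcoreMap_lt_one (d := d) hlam ht0])
  have hs0 : 0 < √(1 - t) := sqrt_pos.2 (by linarith)
  have hderiv_eq : 1 / (F * √(1 - F)) * (-(lam * d * t ^ (d - 1)) * F ^ 2) + 1 / (t * √(1 - t))
      = 1 / (t * √(1 - t)) - lam * d * t ^ (d - 1) * F / √(1 - F) := by
    field_simp
    ring
  have hpow : t ^ (d - 1) * t = t ^ d := by rw [← pow_succ, Nat.sub_add_cancel (by omega)]
  rw [hderiv_eq, sub_pos, div_lt_div_iff₀ hσ0 (by positivity)]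
  calc lam * d * t ^ (d - 1) * F * (t * √(1 - t))
      = lam * d * (t ^ (d - 1) * t) * F * √(1 - t) := by ring
    _ < 1 * √(1 - F) := by rw [hpow, one_mul]; exact hlt

theorem isFixedPt_hardcoreMap_of_isFixedPt_iterate_two (hd : 2 ≤ d) (hlam : 0 < lam)
    (hthr : lam < (d : ℝ) ^ d / ((d : ℝ) - 1) ^ (d + 1)) {p : ℝ} (hp : 0 ≤ p)
    (h2 : IsFixedPt (hardcoreMap lam d)^[2] p) : IsFixedPt (hardcoreMap lam d) p := by
  set q := hardcoreMap lam d p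
  have hqp : hardcoreMap lam d q = p := h2
  have hq0 : 0 < q := hardcoreMap_pos hlam.le hp
  have hp0 : 0 < p := hqp ▸ hardcoreMap_pos hlam.le hq0.le
  refine (strictMonoOn_potential_hardcoreMap_add_potential hd hlam hthr).injOn
    ⟨hq0, hardcoreMap_lt_one hlam hp0⟩ ⟨hp0, hqp ▸ hardcoreMap_lt_one hlam hq0⟩ ?_
  simp only [hqp, q]
  ring

end Threshold

/-- for `r ≥ 3` and `0 < λ < (r−1)^{r−1}/(r−2)^r`, the equation
`x = 1/(1 + λ x^{r−1})` has a unique solution `x ∈ (0,1]`, and the iterates of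
`F(z) = 1/(1 + λ z^{r−1})` converge to `x` from every starting point in `(0,1]`. -/
theorem statement9 (r : ℕ) (hr : 3 ≤ r) (lam : ℝ) (hlam : 0 < lam)
    (hthr : lam < ((r : ℝ) - 1) ^ (r - 1) / ((r : ℝ) - 2) ^ r) :
    ∃ x : ℝ, (x ∈ Set.Ioc (0 : ℝ) 1 ∧ x * (1 + lam * x ^ (r - 1)) = 1)
      ∧ (∀ y ∈ Set.Ioc (0 : ℝ) 1, y * (1 + lam * y ^ (r - 1)) = 1 → y = x)
      ∧ ∀ y ∈ Set.Ioc (0 : ℝ) 1,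
          Tendsto (fun m : ℕ => (fun z : ℝ => 1 / (1 + lam * z ^ (r - 1)))^[m] y)
            atTop (nhds x) := by
  obtain ⟨d, hd, rfl⟩ : ∃ d, 2 ≤ d ∧ r = d + 1 := ⟨r - 1, by omega, by omega⟩
  have hthr' : lam < (d : ℝ) ^ d / ((d : ℝ) - 1) ^ (d + 1) := by
    convert hthr using 3 <;> push_cast <;> ring
  simp only [Nat.add_sub_cancel]
  have hsub : Icc (0 : ℝ) 1 ⊆ Ici 0 := Icc_subset_Ici_self
  have hmaps := mapsTo_hardcoreMap (d := d) hlam.le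
  have hanti := (antitoneOn_hardcoreMap (d := d) hlam.le).mono hsub
  have hcont := (continuousOn_hardcoreMap (d := d) hlam.le).mono hsub
  have hfix : ∀ y ∈ Ioc (0 : ℝ) 1,
      IsFixedPt (hardcoreMap lam d) y ↔ y * (1 + lam * y ^ d) = 1 :=
    fun y hy => isFixedPt_hardcoreMap_iff hlam.le hy.1.le
  obtain ⟨x, hx, hfx⟩ := exists_mem_Icc_isFixedPt_of_mapsTo hcont zero_le_one hmaps
  have hx' : x ∈ Ioc (0 : ℝ) 1 := ⟨hfx ▸ hardcoreMap_pos hlam.le hx.1, hx.2⟩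
  refine ⟨x, ⟨hx', (hfix x hx').1 hfx⟩, fun y hy hyx => ?_, fun y hy => ?_⟩
  · exact hanti.eq_of_isFixedPt (Ioc_subset_Icc_self hy) hx ((hfix y hy).2 hyx) hfx
  · exact tendsto_iterate_of_antitoneOn hmaps hanti hcont
      (fun p hp => isFixedPt_hardcoreMap_of_isFixedPt_iterate_two hd hlam hthr' hp.1)
      hx hfx (Ioc_subset_Icc_self hy)
end

section
/- Let G be an r-regular graph, λ > 0, and let v_1, v_2 be two non-adjacent vertices of G with no common neighbor, with neighbor sets {v_{11},...,v_{1r}} and {v_{21},...,v_{2r}} respectively. Let G° be obtained from G by deleting v_1 and v_2 and adding the r edges {v_{1j}, v_{2j}} for j = 1,...,r. Then Z(λ,G°)/Z(λ,G) = P_G(v_1 ∉ I and v_2 ∉ I) · P_{G\{v_1,v_2}}( for all j ≤ r, v_{1j} ∉ I or v_{2j} ∉ I ), where probabilities are with respect to the Gibbs measures with activity λ on the respective graphs. -/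
open Finset

/-- The graph `G°` obtained from `G` by the rewiring operation on the two vertices
`v₁, v₂`: all edges incident to `v₁` or `v₂` are removed (so `v₁, v₂` become isolated and
can be regarded as deleted), and for each `j` a new edge `{w₁ j, w₂ j}` is added, where
`w₁, w₂` enumerate the neighbors of `v₁` and of `v₂` respectively. -/
def rewired {V : Type*} (G : SimpleGraph V) (v₁ v₂ : V) {r : ℕ}
    (w₁ w₂ : Fin r → V) : SimpleGraph V where
  Adj a b := a ≠ b ∧
    ((G.Adj a b ∧ a ≠ v₁ ∧ a ≠ v₂ ∧ b ≠ v₁ ∧ b ≠ v₂) ∨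
      ∃ j : Fin r, (a = w₁ j ∧ b = w₂ j) ∨ (a = w₂ j ∧ b = w₁ j))
  symm := by
    constructor
    rintro a b ⟨hab, h⟩
    refine ⟨hab.symm, ?_⟩
    rcases h with ⟨h1, h2, h3, h4, h5⟩ | ⟨j, hj | hj⟩
    · exact Or.inl ⟨h1.symm, h4, h5, h2, h3⟩
    · exact Or.inr ⟨j, Or.inr ⟨hj.2, hj.1⟩⟩
    · exact Or.inr ⟨j, Or.inl ⟨hj.2, hj.1⟩⟩
  loopless := by constructor; rintro a ⟨h, -⟩; exact h rfl

/-- `I` is an independent set of the graph `G`. -/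
def IsIndepSet {V : Type*} (G : SimpleGraph V) (I : Finset V) : Prop :=
  ∀ u ∈ I, ∀ w ∈ I, ¬ G.Adj u w

/-- The hard-core partition function `Z(λ, G[S])` of the subgraph of `G` induced on the
vertex subset `S`: the sum of `λ^|I|` over all independent sets `I ⊆ S`. -/
noncomputable def Zhard {V : Type*} [Fintype V] (G : SimpleGraph V) (lam : ℝ)
    (S : Finset V) : ℝ := by
  classical exact ∑ I ∈ S.powerset.filter (fun I => IsIndepSet G I), lam ^ I.card

/-- The probability, under the hard-core Gibbs measure with activity `λ` on the subgraph of
`G` induced on `S`, of the event `E` about the random independent set. -/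
noncomputable def probEvent {V : Type*} [Fintype V] (G : SimpleGraph V) (lam : ℝ)
    (S : Finset V) (E : Finset V → Prop) : ℝ := by
  classical exact
    (∑ I ∈ S.powerset.filter (fun I => IsIndepSet G I ∧ E I), lam ^ I.card) / Zhard G lam S

/-!
Both sides are ratios of partition functions. Conditioning the Gibbs measure of `G` on
`v₁, v₂ ∉ I` gives `P_G(v₁, v₂ ∉ I) = Z(G - v₁ - v₂) / Z(G)`. On the vertices other than
`v₁, v₂`, the graph `G°` is `G - v₁ - v₂` plus the edges `{v_{1j}, v_{2j}}`, so its independent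
sets are exactly the independent sets of `G - v₁ - v₂` that contain no pair `{v_{1j}, v_{2j}}`;
hence `Z(G°) = P_{G - v₁ - v₂}(no pair in I) · Z(G - v₁ - v₂)`.
-/

section HardCore

variable {V : Type*} [Fintype V]

theorem zhard_pos (G : SimpleGraph V) {lam : ℝ} (hlam : 0 < lam) (S : Finset V) :
    0 < Zhard G lam S := by
  classical
  unfold Zhard
  exact Finset.sum_pos (fun I _ => pow_pos hlam _)
    ⟨∅, Finset.mem_filter.mpr ⟨Finset.empty_mem_powerset S, by simp [IsIndepSet]⟩⟩

theorem probEvent_forall_not_mem [DecidableEq V] (G : SimpleGraph V) (lam : ℝ)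
    (S T : Finset V) :
    probEvent G lam S (fun I => ∀ v ∈ T, v ∉ I) = Zhard G lam (S \ T) / Zhard G lam S := by
  unfold probEvent Zhard
  congr 1
  refine Finset.sum_congr ?_ fun _ _ => rfl
  ext I
  simp only [Finset.mem_filter, Finset.mem_powerset, Finset.subset_sdiff,
    Finset.disjoint_right]
  tauto

theorem zhard_eq_probEvent_mul_zhard {G H : SimpleGraph V} {lam : ℝ} {S : Finset V}
    {E : Finset V → Prop} (hZ : Zhard G lam S ≠ 0)
    (hH : ∀ I ⊆ S, IsIndepSet H I ↔ IsIndepSet G I ∧ E I) :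
    Zhard H lam S = probEvent G lam S E * Zhard G lam S := by
  unfold probEvent
  rw [div_mul_cancel₀ _ hZ]
  unfold Zhard
  refine Finset.sum_congr ?_ fun _ _ => rfl
  ext I
  simp only [Finset.mem_filter, Finset.mem_powerset]
  exact and_congr_right (hH I)

end HardCore

theorem isIndepSet_rewired_iff {V : Type*} {G : SimpleGraph V} {v₁ v₂ : V} {r : ℕ}
    {w₁ w₂ : Fin r → V} (hsep : ∀ j, w₁ j ≠ w₂ j) {I : Finset V} (hI : ∀ v ∈ I, v ≠ v₁ ∧ v ≠ v₂) :
    IsIndepSet (rewired G v₁ v₂ w₁ w₂) I ↔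
      IsIndepSet G I ∧ ∀ j, w₁ j ∉ I ∨ w₂ j ∉ I := by
  constructor
  · intro h
    refine ⟨fun u hu w hw hadj => h u hu w hw ⟨hadj.ne, Or.inl
      ⟨hadj, (hI u hu).1, (hI u hu).2, (hI w hw).1, (hI w hw).2⟩⟩, fun j => ?_⟩
    by_contra! hj
    exact h _ hj.1 _ hj.2 ⟨hsep j, Or.inr ⟨j, Or.inl ⟨rfl, rfl⟩⟩⟩
  · rintro ⟨hG, hpair⟩ u hu w hw ⟨-, hadj | ⟨j, ⟨rfl, rfl⟩ | ⟨rfl, rfl⟩⟩⟩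
    · exact hG u hu w hw hadj.1
    · exact (hpair j).elim (· hu) (· hw)
    · exact (hpair j).elim (· hw) (· hu)

theorem statement12_general {V : Type*} [Fintype V] [DecidableEq V] (G : SimpleGraph V)
    (lam : ℝ) (hlam : 0 < lam) {r : ℕ}
    (v₁ v₂ : V)
    (hcommon : ∀ u : V, ¬ (G.Adj v₁ u ∧ G.Adj v₂ u))
    (w₁ w₂ : Fin r → V)
    (hrange₁ : Set.range w₁ = G.neighborSet v₁) (hrange₂ : Set.range w₂ = G.neighborSet v₂) :
    Zhard (rewired G v₁ v₂ w₁ w₂) lam (Finset.univ \ {v₁, v₂}) / Zhard G lam Finset.univ =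
      probEvent G lam Finset.univ (fun I => v₁ ∉ I ∧ v₂ ∉ I) *
        probEvent G lam (Finset.univ \ {v₁, v₂})
          (fun I => ∀ j : Fin r, w₁ j ∉ I ∨ w₂ j ∉ I) := by
  have hsep : ∀ j, w₁ j ≠ w₂ j := fun j h => by
    have h₁ : w₁ j ∈ G.neighborSet v₁ := hrange₁ ▸ Set.mem_range_self j
    have h₂ : w₂ j ∈ G.neighborSet v₂ := hrange₂ ▸ Set.mem_range_self j
    exact hcommon _ ⟨h₁, h ▸ h₂⟩
  have hrewired := zhard_eq_probEvent_mul_zhard (S := Finset.univ \ {v₁, v₂})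
    (zhard_pos G hlam _).ne' fun I hI =>
      isIndepSet_rewired_iff (G := G) hsep fun v hv => by simpa using hI hv
  have hdeleted : probEvent G lam Finset.univ (fun I => v₁ ∉ I ∧ v₂ ∉ I) =
      Zhard G lam (Finset.univ \ {v₁, v₂}) / Zhard G lam Finset.univ := by
    simpa using probEvent_forall_not_mem G lam Finset.univ {v₁, v₂}
  rw [hrewired, hdeleted]
  ring

/-- `Z(λ,G°)/Z(λ,G) = P_G(v₁, v₂ ∉ I) · P_{G∖{v₁,v₂}}(∀ j, v_{1j} ∉ I ∨ v_{2j} ∉ I)`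
for the rewired graph `G°`. -/
theorem statement12 {V : Type*} [Fintype V] [DecidableEq V] (G : SimpleGraph V)
    (lam : ℝ) (hlam : 0 < lam) {r : ℕ}
    (hreg : ∀ v : V, (G.neighborSet v).ncard = r)
    (v₁ v₂ : V) (hne : v₁ ≠ v₂) (hnadj : ¬ G.Adj v₁ v₂)
    (hcommon : ∀ u : V, ¬ (G.Adj v₁ u ∧ G.Adj v₂ u))
    (w₁ w₂ : Fin r → V) (hw₁ : Function.Injective w₁) (hw₂ : Function.Injective w₂)
    (hrange₁ : Set.range w₁ = G.neighborSet v₁) (hrange₂ : Set.range w₂ = G.neighborSet v₂) :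
    Zhard (rewired G v₁ v₂ w₁ w₂) lam (Finset.univ \ {v₁, v₂}) / Zhard G lam Finset.univ =
      probEvent G lam Finset.univ (fun I => v₁ ∉ I ∧ v₂ ∉ I) *
        probEvent G lam (Finset.univ \ {v₁, v₂})
          (fun I => ∀ j : Fin r, w₁ j ∉ I ∨ w₂ j ∉ I) :=
  statement12_general G lam hlam v₁ v₂ hcommon w₁ w₂ hrange₁ hrange₂
end

section
/- Let g ≥ 4, let G be an r-regular graph of girth at least g, and let v_1, v_2 be two vertices at distance at least 2g+1. Let G° be obtained by deleting v_1, v_2 and adding the edges {v_{1j}, v_{2j}}, j = 1,...,r, pairing the neighbors of v_1 with those of v_2 under any bijection. Then G° is r-regular and has girth at least g. -/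
/-!
Each neighbour of `vᵢ` loses its edge to `vᵢ` and gains exactly one new edge, which was not an
edge of `G` because `d(v₁, v₂) ≥ 4`; so degrees are preserved.

A cycle of `G°` without new edges is a cycle of `G`. Otherwise, follow the cycle from the end `y`
of a new edge along old edges up to the next new edge, at `x'` (when there is only one new edge,
the old edges lead back to its other end). Attaching `vᵢ` to both ends of this stretch closes it
into a cycle of `G` through `vᵢ` if `y, x'` are distinct neighbours of the same `vᵢ`, and into a
`v₁`–`v₂` walk otherwise; in both cases of length at most one more than the original cycle, which
is too short for the girth bound or the distance bound.
-/

open Finset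

namespace SimpleGraph

variable {V : Type*} {G : SimpleGraph V}

theorem edist_le_length_add_two {v₁ v₂ a b : V}
    (h : (G.Adj v₁ a ∧ G.Adj v₂ b) ∨ (G.Adj v₂ a ∧ G.Adj v₁ b)) (p : G.Walk a b) :
    G.edist v₁ v₂ ≤ p.length + 2 := by
  rcases h with ⟨h₁, h₂⟩ | ⟨h₂, h₁⟩
  · simpa [add_assoc, one_add_one_eq_two] using G.edist_le (.cons h₁ (p.concat h₂.symm))
  · simpa [edist_comm, add_assoc, one_add_one_eq_two] using
      G.edist_le (.cons h₂ (p.concat h₁.symm))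

theorem egirth_le_length_add_two {v a b : V} (ha : G.Adj v a) (hb : G.Adj v b) (hab : a ≠ b)
    (p : G.Walk a b) (hv : v ∉ p.support) : G.egirth ≤ p.length + 2 := by
  classical
  have hv' : v ∉ p.bypass.support := fun h => hv (p.support_bypass_subset_support h)
  have hcycle : (Walk.cons ha (p.bypass.concat hb.symm)).IsCycle := by
    refine (Walk.cons_isCycle_iff _ _).mpr ⟨p.bypass_isPath.concat hv' _, fun he => ?_⟩
    rw [Walk.edges_concat, List.concat_eq_append, List.mem_append, List.mem_singleton] at he
    rcases he with he | he
    · exact hv' (p.bypass.fst_mem_support_of_mem_edges he)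
    · rcases Sym2.eq_iff.mp he with ⟨rfl, -⟩ | ⟨-, rfl⟩
      · exact hb.ne rfl
      · exact hab rfl
  calc G.egirth ≤ (Walk.cons ha (p.bypass.concat hb.symm)).length := egirth_le_length hcycle
    _ ≤ p.length + 2 := by
      simpa [add_assoc, one_add_one_eq_two] using p.length_bypass_le_length

theorem egirth_le_or_edist_le_length_add_two {v₁ v₂ a b : V}
    (ha : G.Adj v₁ a ∨ G.Adj v₂ a) (hb : G.Adj v₁ b ∨ G.Adj v₂ b) (hab : a ≠ b)
    (p : G.Walk a b) (hv₁ : v₁ ∉ p.support) (hv₂ : v₂ ∉ p.support) :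
    G.egirth ≤ p.length + 2 ∨ G.edist v₁ v₂ ≤ p.length + 2 := by
  rcases ha with ha | ha <;> rcases hb with hb | hb
  · exact .inl (egirth_le_length_add_two ha hb hab p hv₁)
  · exact .inr (edist_le_length_add_two (.inl ⟨ha, hb⟩) p)
  · exact .inr (edist_le_length_add_two (.inr ⟨ha, hb⟩) p)
  · exact .inl (egirth_le_length_add_two ha hb hab p hv₂)

theorem Walk.forall_mem_edgeSet_or_exists_first_not_adj {H : SimpleGraph V} (G : SimpleGraph V)
    {a b : V} (p : H.Walk a b) :
    (∀ e ∈ p.edges, e ∈ G.edgeSet) ∨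
      ∃ (x y : V) (s : H.Walk a x) (h : H.Adj x y) (t : H.Walk y b),
        p = s.append (cons h t) ∧ (∀ e ∈ s.edges, e ∈ G.edgeSet) ∧ ¬G.Adj x y := by
  induction p with
  | nil => exact .inl (by simp)
  | @cons a c b h q ih =>
    by_cases hG : G.Adj a c
    · rcases ih with hq | ⟨x, y, s, h', t, rfl, hs, hxy⟩
      · exact .inl (by simpa [hG] using hq)
      · exact .inr ⟨x, y, cons h s, h', t, rfl, by simpa [hG] using hs, hxy⟩
    · exact .inr ⟨a, c, nil, h, q, rfl, by simp, hG⟩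

variable {v₁ v₂ a b : V}

theorem ne_of_four_le_edist (hfar : 4 ≤ G.edist v₁ v₂) (ha : G.Adj v₁ a) (hb : G.Adj v₂ b) :
    a ≠ b := by
  rintro rfl
  have := hfar.trans (edist_le_length_add_two (.inl ⟨ha, hb⟩) .nil)
  norm_num at this

theorem not_adj_of_four_le_edist (hfar : 4 ≤ G.edist v₁ v₂) (ha : G.Adj v₁ a)
    (hb : G.Adj v₂ b) : ¬G.Adj a b := fun hab => by
  have := hfar.trans (edist_le_length_add_two (.inl ⟨ha, hb⟩) hab.toWalk)
  norm_num at this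

theorem ne_right_of_four_le_edist (hfar : 4 ≤ G.edist v₁ v₂) (ha : G.Adj v₁ a) : a ≠ v₂ := by
  rintro rfl
  have := hfar.trans (G.edist_le ha.toWalk)
  norm_num at this

end SimpleGraph

open SimpleGraph

structure IsFarPairing {V : Type*} (G : SimpleGraph V) (v₁ v₂ : V) {r : ℕ}
    (w₁ w₂ : Fin r → V) : Prop where
  injective₁ : Function.Injective w₁
  injective₂ : Function.Injective w₂
  range₁ : Set.range w₁ = G.neighborSet v₁
  range₂ : Set.range w₂ = G.neighborSet v₂
  four_le_edist : 4 ≤ G.edist v₁ v₂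

section Rewired

variable {V : Type*} {G : SimpleGraph V} {v v₁ v₂ a b x y y' : V} {r : ℕ} {w₁ w₂ : Fin r → V}

theorem rewired_comm : rewired G v₁ v₂ w₁ w₂ = rewired G v₂ v₁ w₂ w₁ := by
  ext a b
  simp only [rewired]
  grind

theorem exists_of_rewired_adj_of_not_adj (h : (rewired G v₁ v₂ w₁ w₂).Adj x y)
    (hG : ¬G.Adj x y) : ∃ j, (x = w₁ j ∧ y = w₂ j) ∨ (x = w₂ j ∧ y = w₁ j) :=
  h.2.resolve_left fun h => hG h.1

theorem rewired_neighborSet_of_not_adj (ha₁ : a ≠ v₁) (ha₂ : a ≠ v₂) (h₁ : ¬G.Adj v₁ a)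
    (h₂ : ¬G.Adj v₂ a) (hrange₁ : Set.range w₁ = G.neighborSet v₁)
    (hrange₂ : Set.range w₂ = G.neighborSet v₂) :
    (rewired G v₁ v₂ w₁ w₂).neighborSet a = G.neighborSet a := by
  ext b
  constructor
  · rintro ⟨-, ⟨hb, -⟩ | ⟨j, ⟨rfl, -⟩ | ⟨rfl, -⟩⟩⟩
    · exact hb
    · exact absurd (hrange₁.subset ⟨j, rfl⟩) h₁
    · exact absurd (hrange₂.subset ⟨j, rfl⟩) h₂
  · intro hb
    refine ⟨hb.ne, .inl ⟨hb, ha₁, ha₂, ?_, ?_⟩⟩ <;> rintro rfl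
    exacts [h₁ hb.symm, h₂ hb.symm]

namespace IsFarPairing

theorem symm (hP : IsFarPairing G v₁ v₂ w₁ w₂) : IsFarPairing G v₂ v₁ w₂ w₁ :=
  ⟨hP.injective₂, hP.injective₁, hP.range₂, hP.range₁, G.edist_comm ▸ hP.four_le_edist⟩

theorem adj₁ (hP : IsFarPairing G v₁ v₂ w₁ w₂) (j : Fin r) : G.Adj v₁ (w₁ j) :=
  hP.range₁.subset ⟨j, rfl⟩

theorem adj₂ (hP : IsFarPairing G v₁ v₂ w₁ w₂) (j : Fin r) : G.Adj v₂ (w₂ j) := hP.symm.adj₁ j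

theorem rewired_adj_ne (hP : IsFarPairing G v₁ v₂ w₁ w₂)
    (h : (rewired G v₁ v₂ w₁ w₂).Adj a b) : a ≠ v₁ ∧ a ≠ v₂ := by
  rcases h with ⟨-, ⟨-, ha₁, ha₂, -⟩ | ⟨j, ⟨rfl, -⟩ | ⟨rfl, -⟩⟩⟩
  · exact ⟨ha₁, ha₂⟩
  · exact ⟨(hP.adj₁ j).ne', ne_right_of_four_le_edist hP.four_le_edist (hP.adj₁ j)⟩
  · exact ⟨ne_right_of_four_le_edist hP.symm.four_le_edist (hP.adj₂ j), (hP.adj₂ j).ne'⟩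

theorem rewired_neighborSet_apply₁ (hP : IsFarPairing G v₁ v₂ w₁ w₂) (j : Fin r) :
    (rewired G v₁ v₂ w₁ w₂).neighborSet (w₁ j) =
      insert (w₂ j) (G.neighborSet (w₁ j) \ {v₁}) := by
  have hj := hP.adj₁ j
  ext b
  simp only [mem_neighborSet, Set.mem_insert_iff, Set.mem_sdiff, Set.mem_singleton_iff]
  constructor
  · rintro ⟨-, ⟨hb, -, -, hb₁, -⟩ | ⟨k, ⟨hk, rfl⟩ | ⟨hk, rfl⟩⟩⟩
    · exact .inr ⟨hb, hb₁⟩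
    · rw [hP.injective₁ hk]; exact .inl rfl
    · exact absurd hk (ne_of_four_le_edist hP.four_le_edist hj (hP.adj₂ k))
  · rintro (rfl | ⟨hb, hb₁⟩)
    · exact ⟨ne_of_four_le_edist hP.four_le_edist hj (hP.adj₂ j), .inr ⟨j, .inl ⟨rfl, rfl⟩⟩⟩
    · refine ⟨hb.ne, .inl ⟨hb, hj.ne', ne_right_of_four_le_edist hP.four_le_edist hj, hb₁, ?_⟩⟩
      rintro rfl
      exact ne_of_four_le_edist hP.four_le_edist hj hb.symm rfl

theorem encard_rewired_neighborSet_apply₁ (hP : IsFarPairing G v₁ v₂ w₁ w₂) (j : Fin r) :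
    ((rewired G v₁ v₂ w₁ w₂).neighborSet (w₁ j)).encard = (G.neighborSet (w₁ j)).encard := by
  rw [hP.rewired_neighborSet_apply₁, Set.encard_insert_of_notMem]
  · exact Set.encard_sdiff_singleton_add_one (hP.adj₁ j).symm
  · exact fun h => not_adj_of_four_le_edist hP.four_le_edist (hP.adj₁ j) (hP.adj₂ j) h.1

theorem encard_rewired_neighborSet (hP : IsFarPairing G v₁ v₂ w₁ w₂) (ha₁ : a ≠ v₁)
    (ha₂ : a ≠ v₂) :
    ((rewired G v₁ v₂ w₁ w₂).neighborSet a).encard = (G.neighborSet a).encard := by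
  by_cases h₁ : G.Adj v₁ a
  · obtain ⟨j, rfl⟩ := hP.range₁.symm.subset h₁
    exact hP.encard_rewired_neighborSet_apply₁ j
  by_cases h₂ : G.Adj v₂ a
  · obtain ⟨j, rfl⟩ := hP.range₂.symm.subset h₂
    rw [rewired_comm]
    exact hP.symm.encard_rewired_neighborSet_apply₁ j
  rw [rewired_neighborSet_of_not_adj ha₁ ha₂ h₁ h₂ hP.range₁ hP.range₂]

theorem notMem_support_rewired (hP : IsFarPairing G v₁ v₂ w₁ w₂)
    (p : (rewired G v₁ v₂ w₁ w₂).Walk a b) (hv : v = v₁ ∨ v = v₂) (hb : b ≠ v) :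
    v ∉ p.support := by
  have hne : ∀ {c d}, (rewired G v₁ v₂ w₁ w₂).Adj c d → c ≠ v := fun h => by
    rcases hv with rfl | rfl
    exacts [(hP.rewired_adj_ne h).1, (hP.rewired_adj_ne h).2]
  intro hmem
  rcases Walk.mem_support_iff_exists_mem_edges.mp hmem with rfl | ⟨e, he, hve⟩
  · exact hb rfl
  induction e with
  | h c d =>
    have hcd := p.edges_subset_edgeSet he
    rcases Sym2.mem_iff.mp hve with rfl | rfl
    exacts [hne hcd rfl, hne hcd.symm rfl]

theorem adj_of_rewired_adj_of_not_adj (hP : IsFarPairing G v₁ v₂ w₁ w₂)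
    (h : (rewired G v₁ v₂ w₁ w₂).Adj x y) (hG : ¬G.Adj x y) :
    (G.Adj v₁ x ∧ G.Adj v₂ y) ∨ (G.Adj v₂ x ∧ G.Adj v₁ y) := by
  obtain ⟨j, ⟨rfl, rfl⟩ | ⟨rfl, rfl⟩⟩ := exists_of_rewired_adj_of_not_adj h hG
  exacts [.inl ⟨hP.adj₁ j, hP.adj₂ j⟩, .inr ⟨hP.adj₂ j, hP.adj₁ j⟩]

theorem eq_of_rewired_adj_of_not_adj (hP : IsFarPairing G v₁ v₂ w₁ w₂)
    (h : (rewired G v₁ v₂ w₁ w₂).Adj x y) (hG : ¬G.Adj x y)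
    (h' : (rewired G v₁ v₂ w₁ w₂).Adj x y') (hG' : ¬G.Adj x y') : y = y' := by
  have hne : ∀ j k, w₁ j ≠ w₂ k := fun j k =>
    ne_of_four_le_edist hP.four_le_edist (hP.adj₁ j) (hP.adj₂ k)
  obtain ⟨j, ⟨rfl, rfl⟩ | ⟨rfl, rfl⟩⟩ := exists_of_rewired_adj_of_not_adj h hG <;>
    obtain ⟨k, ⟨hk, rfl⟩ | ⟨hk, rfl⟩⟩ := exists_of_rewired_adj_of_not_adj h' hG'
  · rw [hP.injective₁ hk]
  · exact absurd hk (hne j k)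
  · exact absurd hk.symm (hne k j)
  · rw [hP.injective₂ hk]

theorem egirth_le_or_edist_le_of_isCycle_rewired (hP : IsFarPairing G v₁ v₂ w₁ w₂) {z : V}
    (c : (rewired G v₁ v₂ w₁ w₂).Walk z z) (hc : c.IsCycle) :
    G.egirth ≤ c.length ∨ G.edist v₁ v₂ ≤ c.length + 1 := by
  rcases c.forall_mem_edgeSet_or_exists_first_not_adj G with
    hc_old | ⟨x, y, s, hxy, t, rfl, hs, hG⟩
  · exact .inl (by simpa using egirth_le_length (hc.transfer hc_old))
  have hxy_notMem : s(x, y) ∉ t.edges := by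
    have := hc.edges_nodup
    simp only [Walk.edges_append, Walk.edges_cons] at this
    exact (List.nodup_cons.mp (List.nodup_append.mp this).2.1).1
  have hy := hP.adj_of_rewired_adj_of_not_adj hxy hG
  rcases t.forall_mem_edgeSet_or_exists_first_not_adj G with
    ht | ⟨x', y', s', hxy', t', rfl, hs', hG'⟩
  · -- `s(x, y)` is the only new edge: the rest of `c` is an old walk from `y` back to `x`.
    have hts : ∀ e ∈ (t.append s).edges, e ∈ G.edgeSet := by
      simp only [Walk.edges_append, List.mem_append]
      rintro e (he | he)
      exacts [ht e he, hs e he]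
    have := edist_le_length_add_two (hy.symm.imp And.symm And.symm) ((t.append s).transfer G hts)
    simp only [Walk.length_transfer, Walk.length_append, Walk.length_cons] at this ⊢
    exact .inr (this.trans_eq (by push_cast; ring))
  -- `s'` is the old stretch of `c` from the first new edge `s(x, y)` to the next one `s(x', y')`.
  have hyx' : y ≠ x' := by
    rintro rfl
    obtain rfl := hP.eq_of_rewired_adj_of_not_adj hxy.symm (by rwa [G.adj_comm]) hxy' hG'
    exact hxy_notMem (by simp [Sym2.eq_swap])
  have hx' := hP.adj_of_rewired_adj_of_not_adj hxy' hG'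
  have hx'_ne := hP.rewired_adj_ne hxy'
  have hsegment := egirth_le_or_edist_le_length_add_two (hy.symm.imp And.right And.right)
    (hx'.imp And.left And.left) hyx' (s'.transfer G hs')
    (by rw [Walk.support_transfer]; exact hP.notMem_support_rewired s' (.inl rfl) hx'_ne.1)
    (by rw [Walk.support_transfer]; exact hP.notMem_support_rewired s' (.inr rfl) hx'_ne.2)
  have hlen : (s'.transfer G hs').length + 2 ≤
      (s.append (Walk.cons hxy (s'.append (Walk.cons hxy' t')))).length := by
    simp only [Walk.length_transfer, Walk.length_append, Walk.length_cons]
    omega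
  refine hsegment.imp (fun h => h.trans ?_) (fun h => h.trans ?_)
  · exact_mod_cast hlen
  · exact_mod_cast hlen.trans (Nat.le_succ _)

end IsFarPairing

end Rewired

theorem statement14_general {V : Type*} (G : SimpleGraph V) (g r : ℕ) (hg : 4 ≤ g)
    (hgirth : (g : ℕ∞) ≤ G.egirth)
    (hreg : ∀ v : V, (G.neighborSet v).ncard = r)
    (v₁ v₂ : V) (hdist : ((2 * g + 1 : ℕ) : ℕ∞) ≤ G.edist v₁ v₂)
    (w₁ w₂ : Fin r → V) (hw₁ : Function.Injective w₁) (hw₂ : Function.Injective w₂)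
    (hrange₁ : Set.range w₁ = G.neighborSet v₁) (hrange₂ : Set.range w₂ = G.neighborSet v₂) :
    (∀ v : {x : V // x ≠ v₁ ∧ x ≠ v₂},
        (((rewired G v₁ v₂ w₁ w₂).induce {x : V | x ≠ v₁ ∧ x ≠ v₂}).neighborSet v).ncard = r)
      ∧ (g : ℕ∞) ≤ ((rewired G v₁ v₂ w₁ w₂).induce {x : V | x ≠ v₁ ∧ x ≠ v₂}).egirth := by
  have hP : IsFarPairing G v₁ v₂ w₁ w₂ :=
    ⟨hw₁, hw₂, hrange₁, hrange₂, le_trans (by exact_mod_cast (by omega : 4 ≤ 2 * g + 1)) hdist⟩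
  refine ⟨fun v => ?_, ?_⟩
  · have hsub : (rewired G v₁ v₂ w₁ w₂).neighborSet v ⊆ Set.range Subtype.val :=
      fun b hb => by simpa using hP.rewired_adj_ne hb.symm
    calc _ = ((rewired G v₁ v₂ w₁ w₂).neighborSet v).ncard :=
          Set.ncard_preimage_of_injective_subset_range Subtype.val_injective hsub
      _ = (G.neighborSet v).ncard := by
          rw [Set.ncard_def, Set.ncard_def, hP.encard_rewired_neighborSet v.2.1 v.2.2]
      _ = r := hreg v
  · refine le_trans (le_egirth.mpr fun z c hc => ?_) (Embedding.induce _).isContained.egirth_le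
    rcases hP.egirth_le_or_edist_le_of_isCycle_rewired c hc with h | h
    · exact hgirth.trans h
    · have : 2 * g + 1 ≤ c.length + 1 := by exact_mod_cast hdist.trans h
      exact_mod_cast (by omega : g ≤ c.length)

/-- if `G` is `r`-regular with girth at least `g ≥ 4` and `v₁, v₂` are at
distance at least `2g+1`, then the rewired graph `G°` (restricted to the remaining
vertices `V ∖ {v₁, v₂}`) is again `r`-regular with girth at least `g`. -/
theorem statement14 {V : Type*} [Fintype V] (G : SimpleGraph V) (g r : ℕ) (hg : 4 ≤ g)
    (hgirth : (g : ℕ∞) ≤ G.egirth)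
    (hreg : ∀ v : V, (G.neighborSet v).ncard = r)
    (v₁ v₂ : V) (hdist : ((2 * g + 1 : ℕ) : ℕ∞) ≤ G.edist v₁ v₂)
    (w₁ w₂ : Fin r → V) (hw₁ : Function.Injective w₁) (hw₂ : Function.Injective w₂)
    (hrange₁ : Set.range w₁ = G.neighborSet v₁) (hrange₂ : Set.range w₂ = G.neighborSet v₂) :
    (∀ v : {x : V // x ≠ v₁ ∧ x ≠ v₂},
        (((rewired G v₁ v₂ w₁ w₂).induce {x : V | x ≠ v₁ ∧ x ≠ v₂}).neighborSet v).ncard = r)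
      ∧ (g : ℕ∞) ≤ ((rewired G v₁ v₂ w₁ w₂).induce {x : V | x ≠ v₁ ∧ x ≠ v₂}).egirth :=
  statement14_general G g r hg hgirth hreg v₁ v₂ hdist w₁ w₂ hw₁ hw₂ hrange₁ hrange₂
end
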